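/- arXiv:2206.11702 — 3 statements merged into one kernel-verified Lean document; each statement's English description precedes it below -/
import Mathlib

section
/- Let V be a real inner product space, and let A, B be linear endomorphisms of V such that ⟨A(u), B(v)⟩ = 0 for all u, v ∈ V and (A + B)(v) = v for all v ∈ Im A ⊕ Im B. Then for every α ∈ [0,1] and every v ∈ Im A ⊕ Im B: ⟨(A − αB)(v), (A − αB)(v)⟩ − ⟨v, v⟩ = −((1−α)/(1+α)) ⟨A(v) − αB(v) − v, A(v) − αB(v) − v⟩. -/
open RealInnerProductSpace

/-!
Write `v = a + b` with `a = A v`, `b = B v` orthogonal. Then `(A - αB) v - v = -(1 + α) • b`, and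
by Pythagoras both sides of the identity equal `(α² - 1) ‖b‖²`.
-/

/-- At `α = -1` both sides vanish, the left one because division by zero gives `0`. -/
lemma neg_one_sub_div_one_add_mul_sq (α c : ℝ) :
    -((1 - α) / (1 + α)) * ((1 + α) ^ 2 * c) = (α ^ 2 - 1) * c := by
  rcases eq_or_ne (1 + α) 0 with h | h
  · obtain rfl : α = -1 := by linarith
    norm_num
  · field_simp
    ring

section

variable {V : Type*} [NormedAddCommGroup V] [InnerProductSpace ℝ V]

lemma inner_sub_smul_self_sub_inner_add_self {a b : V} (h : ⟪a, b⟫ = 0) (α : ℝ) :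
    ⟪a - α • b, a - α • b⟫ - ⟪a + b, a + b⟫ = (α ^ 2 - 1) * ⟪b, b⟫ := by
  simp only [inner_sub_left, inner_sub_right, inner_add_left, inner_add_right,
    real_inner_smul_left, real_inner_smul_right, real_inner_comm a b, h]
  ring

lemma sub_smul_sub_add_eq_neg_one_add_smul (a b : V) (α : ℝ) :
    a - α • b - (a + b) = -(1 + α) • b := by
  module

lemma inner_sub_smul_self_sub_inner_add_self_eq_div {a b : V} (h : ⟪a, b⟫ = 0) (α : ℝ) :
    ⟪a - α • b, a - α • b⟫ - ⟪a + b, a + b⟫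
      = -((1 - α) / (1 + α)) * ⟪a - α • b - (a + b), a - α • b - (a + b)⟫ := by
  rw [inner_sub_smul_self_sub_inner_add_self h, sub_smul_sub_add_eq_neg_one_add_smul,
    real_inner_smul_left, real_inner_smul_right, ← neg_one_sub_div_one_add_mul_sq]
  ring

end

theorem impulsive_energy_identity_general
    {V : Type*} [NormedAddCommGroup V] [InnerProductSpace ℝ V]
    (A B : V →ₗ[ℝ] V)
    (horth : ∀ u v : V, ⟪A u, B v⟫ = 0)
    (hres : ∀ v ∈ LinearMap.range A ⊔ LinearMap.range B, A v + B v = v)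
    (α : ℝ)
    (v : V) (hv : v ∈ LinearMap.range A ⊔ LinearMap.range B) :
    ⟪A v - α • B v, A v - α • B v⟫ - ⟪v, v⟫
      = -((1 - α) / (1 + α)) * ⟪A v - α • B v - v, A v - α • B v - v⟫ := by
  have key := inner_sub_smul_self_sub_inner_add_self_eq_div (horth v v) α
  rwa [hres v hv] at key

theorem impulsive_energy_identity
    {V : Type*} [NormedAddCommGroup V] [InnerProductSpace ℝ V]
    (A B : V →ₗ[ℝ] V)
    (horth : ∀ u v : V, ⟪A u, B v⟫ = 0)
    (hres : ∀ v ∈ LinearMap.range A ⊔ LinearMap.range B, A v + B v = v)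
    (α : ℝ) (hα : α ∈ Set.Icc (0:ℝ) 1)
    (v : V) (hv : v ∈ LinearMap.range A ⊔ LinearMap.range B) :
    ⟪A v - α • B v, A v - α • B v⟫ - ⟪v, v⟫
      = -((1 - α) / (1 + α)) * ⟪A v - α • B v - v, A v - α • B v - v⟫ :=
  impulsive_energy_identity_general A B horth hres α v hv
end

section
/- Carnot's theorem for impulsive collisions: Let (V, ⟨·,·⟩) be a real inner product space, P and Q orthogonal projectors onto complementary orthogonal subspaces (P + Q = Id, PQ = QP = 0, P, Q self-adjoint idempotents). For v ∈ V, α ∈ [0,1], set v⁺ = (P − αQ)(v). Define T(w) = ½⟨w, w⟩. Then T(v⁺) − T(v) = −((1−α)/(1+α)) T(v⁺ − v). -/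
open RealInnerProductSpace

/-!
Split `v = P v + Q v` into orthogonal components `p = P v`, `q = Q v`. Then `v⁺ = p - α q` and
`v⁺ - v = -(1 + α) q`, so by Pythagoras both sides of the identity equal `(α² - 1) ‖q‖² / 2`.
This holds for every real `α`: at `α = -1` the factor `(1 - α) / (1 + α)` is `0` by the
convention `x / 0 = 0`, and indeed `v⁺ = v` there.
-/

section

variable {V : Type*} [NormedAddCommGroup V] [InnerProductSpace ℝ V]

theorem inner_apply_apply_eq_zero_of_comp_eq_zero {P Q : V →ₗ[ℝ] V}
    (hPsa : ∀ x y : V, ⟪P x, y⟫ = ⟪x, P y⟫) (hPQ : P ∘ₗ Q = 0) (x : V) :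
    ⟪P x, Q x⟫ = 0 := by
  rw [hPsa, ← LinearMap.comp_apply, hPQ, LinearMap.zero_apply, inner_zero_right]

theorem carnot_of_inner_eq_zero {p q : V} (hpq : ⟪p, q⟫ = 0) (α : ℝ) :
    (1/2 : ℝ) * ⟪p - α • q, p - α • q⟫ - (1/2 : ℝ) * ⟪p + q, p + q⟫
      = -((1 - α) / (1 + α))
          * ((1/2 : ℝ) * ⟪(p - α • q) - (p + q), (p - α • q) - (p + q)⟫) := by
  have hpαq : ⟪p, α • q⟫ = 0 := by rw [real_inner_smul_right, hpq, mul_zero]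
  have hjump : (p - α • q) - (p + q) = -((1 + α) • q) := by module
  rw [hjump, inner_neg_neg, real_inner_smul_left, real_inner_smul_right,
    real_inner_self_eq_norm_mul_norm, real_inner_self_eq_norm_mul_norm,
    real_inner_self_eq_norm_mul_norm, norm_sub_sq_eq_norm_sq_add_norm_sq_real hpαq,
    norm_add_sq_eq_norm_sq_add_norm_sq_real hpq, norm_smul, Real.norm_eq_abs]
  field_simp
  rw [sq_abs]
  ring

end

theorem carnot_theorem_general
    {V : Type*} [NormedAddCommGroup V] [InnerProductSpace ℝ V]
    (P Q : V →ₗ[ℝ] V)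
    (hPsa : ∀ x y : V, ⟪P x, y⟫ = ⟪x, P y⟫)
    (hPQ : P ∘ₗ Q = 0)
    (hsum : P + Q = LinearMap.id)
    (α : ℝ) (v : V) :
    (1/2 : ℝ) * ⟪P v - α • Q v, P v - α • Q v⟫ - (1/2 : ℝ) * ⟪v, v⟫
      = -((1 - α) / (1 + α))
          * ((1/2 : ℝ) * ⟪(P v - α • Q v) - v, (P v - α • Q v) - v⟫) := by
  have hv : P v + Q v = v := by rw [← LinearMap.add_apply, hsum, LinearMap.id_apply]
  simpa only [hv] using
    carnot_of_inner_eq_zero (inner_apply_apply_eq_zero_of_comp_eq_zero hPsa hPQ v) α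

theorem carnot_theorem
    {V : Type*} [NormedAddCommGroup V] [InnerProductSpace ℝ V]
    (P Q : V →ₗ[ℝ] V)
    (hPsa : ∀ x y : V, ⟪P x, y⟫ = ⟪x, P y⟫)
    (hQsa : ∀ x y : V, ⟪Q x, y⟫ = ⟪x, Q y⟫)
    (hPidem : P ∘ₗ P = P) (hQidem : Q ∘ₗ Q = Q)
    (hPQ : P ∘ₗ Q = 0) (hQP : Q ∘ₗ P = 0)
    (hsum : P + Q = LinearMap.id)
    (α : ℝ) (hα : α ∈ Set.Icc (0:ℝ) 1) (v : V) :
    (1/2 : ℝ) * ⟪P v - α • Q v, P v - α • Q v⟫ - (1/2 : ℝ) * ⟪v, v⟫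
      = -((1 - α) / (1 + α))
          * ((1/2 : ℝ) * ⟪(P v - α • Q v) - v, (P v - α • Q v) - v⟫) :=
  carnot_theorem_general P Q hPsa hPQ hsum α v
end

section
/- With notation as in Carnot's theorem (v⁺ = (P − αQ)v for orthogonal projectors P, Q with P + Q = Id and restitution α ∈ [0,1]), the kinetic energy does not increase: T(v⁺) ≤ T(v), with equality if α = 1. -/
open RealInnerProductSpace

/-!
Writing `v = P v + Q v` with `P v ⟂ Q v`, Pythagoras gives
`⟪v⁺, v⁺⟫ = ⟪v, v⟫ - (1 - α²) ⟪Q v, Q v⟫`, and the defect `(1 - α²) ⟪Q v, Q v⟫`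
is nonnegative for `α ∈ [0, 1]` and vanishes for `α = 1`.
-/

section

variable {V : Type*} [NormedAddCommGroup V] [InnerProductSpace ℝ V]

lemma real_inner_sub_smul_self_of_inner_eq_zero {x y : V} (h : ⟪x, y⟫ = 0) (α : ℝ) :
    ⟪x - α • y, x - α • y⟫ = ⟪x + y, x + y⟫ - (1 - α ^ 2) * ⟪y, y⟫ := by
  have h' : ⟪y, x⟫ = 0 := by rw [real_inner_comm, h]
  simp only [inner_sub_sub_self, inner_add_add_self, real_inner_smul_left,
    real_inner_smul_right, h, h']
  ring

lemma real_inner_sub_smul_self_le_of_inner_eq_zero {x y : V} (h : ⟪x, y⟫ = 0) {α : ℝ}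
    (hα : α ∈ Set.Icc (0 : ℝ) 1) :
    ⟪x - α • y, x - α • y⟫ ≤ ⟪x + y, x + y⟫ := by
  have hdefect : 0 ≤ (1 - α ^ 2) * ⟪y, y⟫ :=
    mul_nonneg (by nlinarith [hα.1, hα.2]) real_inner_self_nonneg
  rw [real_inner_sub_smul_self_of_inner_eq_zero h]
  linarith

lemma real_inner_apply_apply_eq_zero_of_comp_eq_zero {P Q : V →ₗ[ℝ] V}
    (hPsa : ∀ x y : V, ⟪P x, y⟫ = ⟪x, P y⟫) (hPQ : P ∘ₗ Q = 0) (x y : V) :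
    ⟪P x, Q y⟫ = 0 := by
  rw [hPsa, ← LinearMap.comp_apply, hPQ, LinearMap.zero_apply, inner_zero_right]

end

theorem carnot_energy_nonincreasing_general
    {V : Type*} [NormedAddCommGroup V] [InnerProductSpace ℝ V]
    (P Q : V →ₗ[ℝ] V)
    (hPsa : ∀ x y : V, ⟪P x, y⟫ = ⟪x, P y⟫)
    (hPQ : P ∘ₗ Q = 0)
    (hsum : P + Q = LinearMap.id)
    (α : ℝ) (hα : α ∈ Set.Icc (0:ℝ) 1) (v : V) :
    (1/2 : ℝ) * ⟪P v - α • Q v, P v - α • Q v⟫ ≤ (1/2 : ℝ) * ⟪v, v⟫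
    ∧ (α = 1 →
        (1/2 : ℝ) * ⟪P v - α • Q v, P v - α • Q v⟫ = (1/2 : ℝ) * ⟪v, v⟫) := by
  have horth : ⟪P v, Q v⟫ = 0 := real_inner_apply_apply_eq_zero_of_comp_eq_zero hPsa hPQ v v
  have hv : P v + Q v = v := by simpa using LinearMap.congr_fun hsum v
  refine ⟨?_, fun hα1 => ?_⟩
  · have := real_inner_sub_smul_self_le_of_inner_eq_zero horth hα
    rw [hv] at this
    linarith
  · rw [real_inner_sub_smul_self_of_inner_eq_zero horth, hv, hα1]
    ring

theorem carnot_energy_nonincreasing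
    {V : Type*} [NormedAddCommGroup V] [InnerProductSpace ℝ V]
    (P Q : V →ₗ[ℝ] V)
    (hPsa : ∀ x y : V, ⟪P x, y⟫ = ⟪x, P y⟫)
    (hQsa : ∀ x y : V, ⟪Q x, y⟫ = ⟪x, Q y⟫)
    (hPidem : P ∘ₗ P = P) (hQidem : Q ∘ₗ Q = Q)
    (hPQ : P ∘ₗ Q = 0) (hQP : Q ∘ₗ P = 0)
    (hsum : P + Q = LinearMap.id)
    (α : ℝ) (hα : α ∈ Set.Icc (0:ℝ) 1) (v : V) :
    (1/2 : ℝ) * ⟪P v - α • Q v, P v - α • Q v⟫ ≤ (1/2 : ℝ) * ⟪v, v⟫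
    ∧ (α = 1 →
        (1/2 : ℝ) * ⟪P v - α • Q v, P v - α • Q v⟫ = (1/2 : ℝ) * ⟪v, v⟫) :=
  carnot_energy_nonincreasing_general P Q hPsa hPQ hsum α hα v
end
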